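/- arXiv:1703.03319 — 3 statements merged into one kernel-verified Lean document; each statement's English description precedes it below -/
import Mathlib

section
/- Let W be a real n_v × n_w matrix, v ∈ ℝ^{n_v}, c ∈ ℝ^{n_w} and d ∈ ℝ, and suppose the polyhedron 𝒲 := {w ∈ ℝ^{n_w} : W w ≤ v} is nonempty. Then the robust constraint (∀ w ∈ 𝒲, cᵀw + d ≤ 0) holds if and only if there exists λ ∈ ℝ^{n_v} with λ ≥ 0 componentwise, Wᵀλ = c and vᵀλ + d ≤ 0. (Exact dual reformulation of a robust affine constraint via linear-programming strong duality.) -/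
/-!
Weak duality gives one direction: `c ⬝ᵥ w = lam ⬝ᵥ W *ᵥ w ≤ lam ⬝ᵥ v`. For the other, the
robust constraint homogenizes, thanks to the feasible point, to
`W *ᵥ y ≤ t • v, t ≥ 0 ⟹ c ⬝ᵥ y + t * d ≤ 0`, and Farkas' lemma turns this implication into
the dual certificate. Farkas' lemma follows from separating a point from the cone spanned by
the columns of a matrix, which is closed by the conic Carathéodory theorem: every point of the
cone is a nonnegative combination of linearly independent columns.
-/

open Function Matrix

section Caratheodory

variable {𝕜 E ι : Type*} [Field 𝕜] [LinearOrder 𝕜] [IsStrictOrderedRing 𝕜]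
  [AddCommGroup E] [Module 𝕜 E] [Finite ι]

theorem LinearMap.exists_nonneg_map_eq_support_ssubset (f : (ι → 𝕜) →ₗ[𝕜] E) {l g : ι → 𝕜}
    (hl : 0 ≤ l) (hg : f g = 0) (hgl : support g ⊆ support l) (hpos : ∃ i, 0 < g i) :
    ∃ μ, 0 ≤ μ ∧ f μ = f l ∧ support μ ⊂ support l := by
  obtain ⟨i₀, hi₀, hmin⟩ :=
    Set.exists_min_image {i | 0 < g i} (fun i => l i / g i) (Set.toFinite _) hpos
  set t := l i₀ / g i₀
  have ht : 0 ≤ t := div_nonneg (hl i₀) hi₀.le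
  refine ⟨l - t • g, fun i => ?_, by simp [hg], ?_⟩
  · rcases le_or_gt (g i) 0 with hgi | hgi
    · simpa using (mul_nonpos_of_nonneg_of_nonpos ht hgi).trans (hl i)
    · simpa using (le_div_iff₀ hgi).1 (hmin i hgi)
  · refine (Set.ssubset_iff_of_subset fun i hi => ?_).2 ⟨i₀, hgl hi₀.ne', by simp [t, hi₀.ne']⟩
    by_contra hli
    have : g i = 0 := notMem_support.1 fun h => hli (hgl h)
    simp_all

theorem LinearMap.exists_nonneg_map_eq_injOn_support (f : (ι → 𝕜) →ₗ[𝕜] E) {l : ι → 𝕜}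
    (hl : 0 ≤ l) : ∃ μ, 0 ≤ μ ∧ f μ = f l ∧ Set.InjOn f {x | support x ⊆ support μ} := by
  set S := {μ : ι → 𝕜 | 0 ≤ μ ∧ f μ = f l}
  have hS : S.Nonempty := ⟨l, hl, rfl⟩
  set μ := argminOn support S hS
  obtain ⟨hμ, hfμ⟩ : μ ∈ S := argminOn_mem support S hS
  refine ⟨μ, hμ, hfμ, fun x hx y hy hxy => sub_eq_zero.1 ?_⟩
  by_contra hg
  have hg0 : f (x - y) = 0 := by simp [hxy]
  have hgμ : support (x - y) ⊆ support μ := (support_sub x y).trans (Set.union_subset hx hy)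
  obtain ⟨i, hi⟩ := Function.ne_iff.1 hg
  obtain ⟨ν, hν, hfν, hνμ⟩ : ∃ ν, 0 ≤ ν ∧ f ν = f μ ∧ support ν ⊂ support μ := by
    rcases lt_or_gt_of_ne hi with h | h
    · exact f.exists_nonneg_map_eq_support_ssubset hμ (g := y - x) (by simp [hxy])
        ((support_sub y x).trans (Set.union_subset hy hx)) ⟨i, by simpa using h⟩
    · exact f.exists_nonneg_map_eq_support_ssubset hμ hg0 hgμ ⟨i, h⟩
  exact not_lt_argminOn support S ⟨hν, hfν.trans hfμ⟩ hνμ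

end Caratheodory

section Closed

variable {ι E : Type*} [Finite ι] [AddCommGroup E] [Module ℝ E] [TopologicalSpace E]
  [IsTopologicalAddGroup E] [ContinuousSMul ℝ E] [T2Space E]

theorem LinearMap.isClosed_image_nonneg_of_injOn (f : (ι → ℝ) →ₗ[ℝ] E) (s : Set ι)
    (hs : Set.InjOn f {x | support x ⊆ s}) :
    IsClosed (f '' {x | 0 ≤ x ∧ support x ⊆ s}) := by
  let V : Submodule ℝ (ι → ℝ) := Submodule.pi sᶜ fun _ => ⊥
  have hV : ∀ x, x ∈ V ↔ support x ⊆ s := by simp [V, Submodule.mem_pi, ← support_subset_iff']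
  have hker : LinearMap.ker (f.domRestrict V) = ⊥ :=
    LinearMap.ker_eq_bot'.2 fun x hx => Subtype.ext <|
      hs ((hV x).1 x.2) (by simp) (by simpa using hx)
  have hclosed : IsClosed {x : V | 0 ≤ (x : ι → ℝ)} :=
    isClosed_le continuous_const continuous_subtype_val
  convert (LinearMap.isClosedEmbedding_of_injective hker).isClosedMap _ hclosed using 1
  ext y
  simp only [Set.mem_image, Set.mem_ofPred_eq, Subtype.exists, LinearMap.domRestrict_apply, hV]
  tauto

theorem PointedCone.isClosed_map_positive (f : (ι → ℝ) →ₗ[ℝ] E) :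
    IsClosed ((PointedCone.positive ℝ (ι → ℝ)).map f : Set E) := by
  have hcone : ((PointedCone.positive ℝ (ι → ℝ)).map f : Set E) =
      ⋃ (s : Set ι) (_ : Set.InjOn f {x | support x ⊆ s}), f '' {x | 0 ≤ x ∧ support x ⊆ s} := by
    ext y
    simp only [PointedCone.coe_map, Set.mem_image, SetLike.mem_coe, PointedCone.mem_positive,
      Set.mem_iUnion]
    constructor
    · rintro ⟨l, hl, rfl⟩
      obtain ⟨μ, hμ, hfμ, hinj⟩ := f.exists_nonneg_map_eq_injOn_support hl
      exact ⟨support μ, hinj, μ, ⟨hμ, subset_rfl⟩, hfμ⟩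
    · rintro ⟨s, -, x, ⟨hx, -⟩, rfl⟩
      exact ⟨x, hx, rfl⟩
  rw [hcone]
  exact isClosed_iUnion_of_finite fun s => isClosed_iUnion_of_finite fun hs =>
    f.isClosed_image_nonneg_of_injOn s hs

end Closed

section Farkas

variable {m n : Type*} [Fintype m] [Fintype n]

theorem Matrix.exists_nonneg_mulVec_eq_iff (A : Matrix m n ℝ) (b : m → ℝ) :
    (∃ x, 0 ≤ x ∧ A *ᵥ x = b) ↔ ∀ y, 0 ≤ y ᵥ* A → 0 ≤ b ⬝ᵥ y := by
  classical
  constructor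
  · rintro ⟨x, hx, rfl⟩ y hy
    rw [dotProduct_comm, dotProduct_mulVec]
    exact dotProduct_nonneg_of_nonneg hy hx
  · intro hdual
    by_contra hb
    let C : ProperCone ℝ (m → ℝ) :=
      ⟨(PointedCone.positive ℝ (n → ℝ)).map A.mulVecLin, PointedCone.isClosed_map_positive _⟩
    obtain ⟨φ, hφC, hφb⟩ :=
      C.hyperplane_separation_point (x₀ := b) fun ⟨x, hx, hAx⟩ => hb ⟨x, hx, hAx⟩
    set y := (dotProductEquiv ℝ m).symm φ.toLinearMap
    have hy : ∀ z, φ z = y ⬝ᵥ z := fun z =>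
      (LinearMap.congr_fun ((dotProductEquiv ℝ m).apply_symm_apply φ.toLinearMap) z).symm
    have hyA : 0 ≤ y ᵥ* A := fun j => by
      have := hφC _ ⟨Pi.single j 1, Pi.single_nonneg.2 zero_le_one, rfl⟩
      simpa [hy, mulVec_single_one, vecMul, dotProduct, mul_comm] using this
    exact hφb.not_ge (by rw [hy, dotProduct_comm]; exact hdual y hyA)

theorem Matrix.exists_nonneg_mulVec_eq_dotProduct_le (A : Matrix m n ℝ) (b : m → ℝ) (a : n → ℝ)
    (β : ℝ) (h : ∀ y (t : ℝ), 0 ≤ t → 0 ≤ y ᵥ* A + t • a → 0 ≤ b ⬝ᵥ y + t * β) :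
    ∃ x, 0 ≤ x ∧ A *ᵥ x = b ∧ a ⬝ᵥ x ≤ β := by
  -- Farkas' lemma for the system `A x = b`, `a ⬝ᵥ x + s = β` with a slack variable `s ≥ 0`.
  obtain ⟨z, hz, hBz⟩ := (fromBlocks A 0 (replicateRow Unit a) (1 : Matrix Unit Unit ℝ))
    |>.exists_nonneg_mulVec_eq_iff (Sum.elim b fun _ => β) |>.2 fun y hy => by
      have hrow : y ∘ Sum.inr ᵥ* replicateRow Unit a = y (.inr ()) • a := by
        ext; simp [vecMul, dotProduct]
      simp only [vecMul_fromBlocks, hrow] at hy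
      have ht : 0 ≤ y (.inr ()) := by simpa using hy (.inr ())
      simpa [dotProduct, Fintype.sum_sum_type, mul_comm] using h _ _ ht fun j => hy (.inl j)
  simp only [fromBlocks_mulVec, Sum.elim_eq_iff, replicateRow_mulVec_eq_const] at hBz
  have hrow : a ⬝ᵥ (z ∘ Sum.inl) + z (.inr ()) = β := by simpa using congrFun hBz.2 ()
  have hslack : 0 ≤ z (.inr ()) := hz _
  simp only [zero_mulVec, add_zero] at hBz
  exact ⟨z ∘ Sum.inl, fun j => hz _, hBz.1, by linarith⟩

end Farkas

section Robust

variable {𝕜 m n : Type*} [Field 𝕜] [LinearOrder 𝕜] [IsStrictOrderedRing 𝕜] [Fintype n]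
  {W : Matrix m n 𝕜} {v : m → 𝕜} {c : n → 𝕜} {d : 𝕜}

theorem dotProduct_nonpos_of_mulVec_nonpos (hrob : ∀ w, W *ᵥ w ≤ v → c ⬝ᵥ w + d ≤ 0)
    {w₀ u : n → 𝕜} (hw₀ : W *ᵥ w₀ ≤ v) (hu : W *ᵥ u ≤ 0) : c ⬝ᵥ u ≤ 0 := by
  by_contra! hcu
  -- moving from `w₀` by `s • u` drives the constraint value up to `1`
  set s := (1 - (c ⬝ᵥ w₀ + d)) / (c ⬝ᵥ u)
  have hs : 0 ≤ s := div_nonneg (by linarith [hrob w₀ hw₀]) hcu.le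
  have hfeas : W *ᵥ (w₀ + s • u) ≤ v := by
    rw [mulVec_add, mulVec_smul]
    simpa using add_le_add hw₀ (smul_nonpos_of_nonneg_of_nonpos hs hu)
  have := hrob _ hfeas
  rw [dotProduct_add, dotProduct_smul, smul_eq_mul, div_mul_cancel₀ _ hcu.ne'] at this
  linarith

theorem dotProduct_add_mul_nonpos_of_mulVec_le_smul (hrob : ∀ w, W *ᵥ w ≤ v → c ⬝ᵥ w + d ≤ 0)
    (hne : ∃ w, W *ᵥ w ≤ v) {y : n → 𝕜} {t : 𝕜} (ht : 0 ≤ t) (hy : W *ᵥ y ≤ t • v) :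
    c ⬝ᵥ y + t * d ≤ 0 := by
  rcases ht.eq_or_lt with rfl | ht
  · obtain ⟨w₀, hw₀⟩ := hne
    simpa using dotProduct_nonpos_of_mulVec_nonpos hrob hw₀ (by simpa using hy)
  · have hfeas : W *ᵥ (t⁻¹ • y) ≤ v := by
      rw [mulVec_smul]
      exact (inv_smul_le_iff_of_pos ht).2 hy
    have := hrob _ hfeas
    rw [dotProduct_smul, smul_eq_mul] at this
    calc c ⬝ᵥ y + t * d = t * (t⁻¹ * (c ⬝ᵥ y) + d) := by field_simp
      _ ≤ 0 := mul_nonpos_of_nonneg_of_nonpos ht.le this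

end Robust

/-- **Exact dual reformulation of a robust affine constraint (LP strong duality).**
If the polyhedron `{w : W w ≤ v}` is nonempty, then the robust constraint
`∀ w, W w ≤ v → cᵀ w + d ≤ 0` holds iff there exists `lam ≥ 0` with
`Wᵀ lam = c` and `vᵀ lam + d ≤ 0`. -/
theorem robust_affine_constraint_dual_iff
    (n_v n_w : ℕ) (W : Matrix (Fin n_v) (Fin n_w) ℝ)
    (v : Fin n_v → ℝ) (c : Fin n_w → ℝ) (d : ℝ)
    (hne : ∃ w : Fin n_w → ℝ, W.mulVec w ≤ v) :
    (∀ w : Fin n_w → ℝ, W.mulVec w ≤ v → c ⬝ᵥ w + d ≤ 0) ↔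
      (∃ lam : Fin n_v → ℝ,
        (∀ i, 0 ≤ lam i) ∧ Wᵀ.mulVec lam = c ∧ v ⬝ᵥ lam + d ≤ 0) := by
  constructor
  · intro hrob
    obtain ⟨lam, hlam, hWlam, hvlam⟩ := Wᵀ.exists_nonneg_mulVec_eq_dotProduct_le c v (-d)
      fun y t ht hy => by
        have := dotProduct_add_mul_nonpos_of_mulVec_le_smul hrob hne (y := -y) ht
          (by rw [vecMul_transpose] at hy; simpa [mulVec_neg, neg_le_iff_add_nonneg'] using hy)
        simp only [dotProduct_neg] at this
        linarith
    exact ⟨lam, hlam, hWlam, by linarith⟩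
  · rintro ⟨lam, hlam, hWlam, hvlam⟩ w hw
    have hweak : c ⬝ᵥ w ≤ v ⬝ᵥ lam := by
      rw [← hWlam, mulVec_transpose, ← dotProduct_mulVec, dotProduct_comm v]
      exact dotProduct_le_dotProduct_of_nonneg_left hw hlam
    linarith
end

section
/- (Theorem 1, feasibility of the MIQP solution.) With the setup of Lemma 1, let λ = (λ_1,…,λ_m) ∈ ℝ^{m·n_v} with λ ≥ 0 componentwise and δ ∈ Δ := ℝ^{n_c} × {0,1}^{n_b} satisfy the stacked constraints of the mixed-integer program: 𝐕̄ᵀλ + G^H 𝐁 h + G^θ 𝐀 θ + G^δ δ + g ≤ 0 and 𝐖̄ᵀλ = (I_m ⊗ [H 0]ᵀ) 𝐆ᵀ + 𝐠ᵀ, where 𝐕̄ := diag(𝐯,…,𝐯), 𝐖̄ := diag(𝐖,…,𝐖) are m-fold block-diagonal matrices, ⊗ is the Kronecker product, 𝐆 collects the row blocks G^H_{i·}𝐁 and 𝐠 collects the row blocks G^w_{i·}, and [H 0] is H padded with n_w zero columns. Then (H, h, θ) belongs to the robust constraint set C^φ := {(H,h,θ) : ∀𝐰 ∈ 𝒲,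 ∃δ ∈ Δ, g^φ(H,h,θ,𝐰,δ) ≤ 0}; that is, any feasible (hence any optimal) solution of the mixed-integer quadratic program is a feasible, possibly suboptimal, solution of the robust policy synthesis problem. -/
open Matrix Kronecker

/-- `padZero M` is the matrix `M` padded on the right with `q` zero columns,
e.g. `[H 0]` is `padZero H` and `[𝐁H 0]` is `padZero (B * H)`. -/
noncomputable def padZero {α : Type*} {p q : ℕ} (M : Matrix α (Fin p) ℝ) :
    Matrix α (Fin (p + q)) ℝ :=
  fun i j => if h : (j : ℕ) < p then M i ⟨(j : ℕ), h⟩ else 0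

/-- `δ ∈ Δ := ℝ^{n_c} × {0,1}^{n_b}`: the last `n_b` entries are binary. -/
def memDelta (n_c n_b : ℕ) (δ : Fin (n_c + n_b) → ℝ) : Prop :=
  ∀ j : Fin (n_c + n_b), n_c ≤ (j : ℕ) → δ j = 0 ∨ δ j = 1

/-! For each constraint row `i`, the stacked equality says that the `𝐰`-coefficient row
`G^H_{i·}[𝐁H 0] + G^w_{i·}` equals `λ_iᵀ 𝐖`. Hence for `𝐰 ∈ 𝒲` the `𝐰`-term is
`λ_iᵀ 𝐖 𝐰 ≤ λ_iᵀ 𝐯` because `λ_i ≥ 0`, and `λ_iᵀ 𝐯` is the `i`-th entry of `𝐕̄ᵀλ`. So the stacked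
inequality bounds `g^φ` by `0` for every disturbance, with the same `δ`. -/

lemma mul_padZero {α β : Type*} [Fintype β] {p q : ℕ} (B : Matrix α β ℝ)
    (H : Matrix β (Fin p) ℝ) :
    B * padZero (q := q) H = padZero (q := q) (B * H) := by
  ext i k
  by_cases hk : (k : ℕ) < p <;> simp [padZero, hk, Matrix.mul_apply]

namespace Matrix

variable {ι κ α β γ R : Type*}

lemma mulVec_le_mulVec_of_nonneg [Semiring R] [PartialOrder R] [IsOrderedRing R] [Fintype κ]
    {A : Matrix ι κ R} (hA : ∀ i j, 0 ≤ A i j) {x y : κ → R} (hxy : x ≤ y) :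
    A *ᵥ x ≤ A *ᵥ y :=
  fun i => dotProduct_le_dotProduct_of_nonneg_left hxy (hA i)

lemma one_kronecker_eq [Semiring R] [DecidableEq ι] (W : Matrix α β R) :
    (1 : Matrix ι ι R) ⊗ₖ W = fun p q => if p.1 = q.1 then W p.2 q.2 else 0 := by
  ext p q
  simp [one_apply]

lemma transpose_mulVec_blockDiag_col [CommSemiring R] [Fintype ι] [Fintype κ] [DecidableEq ι]
    {v : κ → R} {V : Matrix (ι × κ) ι R} (hV : V = fun p j => if p.1 = j then v p.2 else 0)
    (x : ι × κ → R) :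
    Vᵀ *ᵥ x = of (Function.curry x) *ᵥ v := by
  ext i
  simp only [mulVec, dotProduct, transpose_apply, Fintype.sum_prod_type]
  simp [hV, mul_comm]

lemma mul_eq_of_kronecker_mulVec_vec_eq [CommSemiring R] [Fintype ι] [Fintype α] [Fintype γ]
    [DecidableEq ι] {Λ : Matrix ι α R} {W : Matrix α β R} {G : Matrix ι γ R} {P : Matrix γ β R}
    {F : Matrix ι β R} (h : (1 ⊗ₖ W)ᵀ *ᵥ vec Λᵀ = (1 ⊗ₖ Pᵀ) *ᵥ vec Gᵀ + vec Fᵀ) :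
    Λ * W = G * P + F := by
  rw [← kroneckerMap_transpose, transpose_one, ← vec_mul_eq_mulVec, ← vec_mul_eq_mulVec,
    ← vec_add, vec_inj, ← transpose_mul, ← transpose_mul, ← transpose_add] at h
  exact transpose_injective h

end Matrix

/-- **Theorem 1 (feasibility of the MIQP solution).**
If the stacked multiplier `lam = (lam_1, …, lam_m) ≥ 0` and `δ ∈ Δ` satisfy the
stacked constraints `𝐕̄ᵀλ + G^H 𝐁 h + G^θ 𝐀 θ + G^δ δ + g ≤ 0` and
`𝐖̄ᵀλ = (I_m ⊗ [H 0]ᵀ) 𝐆ᵀ + 𝐠ᵀ` of the mixed-integer program (Problem 3), then the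
policy `(H, h, θ)` belongs to the robust constraint set
`C^φ = {(H,h,θ) : ∀ 𝐰 ∈ 𝒲, ∃ δ ∈ Δ, g^φ(H,h,θ,𝐰,δ) ≤ 0}`. -/
theorem miqp_solution_feasible
    (N n_x n_u n_w n_v m n_c n_b : ℕ)
    (A : Matrix (Fin ((N+1)*n_x)) (Fin n_x) ℝ)
    (B : Matrix (Fin ((N+1)*n_x)) (Fin (N*n_u)) ℝ)
    (GH : Matrix (Fin m) (Fin ((N+1)*n_x)) ℝ)
    (Gw : Matrix (Fin m) (Fin (N*n_w + n_w)) ℝ)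
    (Gθ : Matrix (Fin m) (Fin ((N+1)*n_x)) ℝ)
    (Gδ : Matrix (Fin m) (Fin (n_c + n_b)) ℝ)
    (g : Fin m → ℝ)
    (Wb : Matrix (Fin n_v) (Fin (N*n_w + n_w)) ℝ)
    (v : Fin n_v → ℝ)
    (H : Matrix (Fin (N*n_u)) (Fin (N*n_w)) ℝ)
    (h : Fin (N*n_u) → ℝ) (θ : Fin n_x → ℝ)
    (δ : Fin (n_c + n_b) → ℝ) (hδ : memDelta n_c n_b δ)
    (lam : Fin m × Fin n_v → ℝ)
    (hlam : ∀ p, 0 ≤ lam p)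
    -- `𝐕̄ := diag(𝐯, …, 𝐯)` and `𝐖̄ := diag(𝐖, …, 𝐖)`, `m`-fold block diagonal
    (Vbar : Matrix (Fin m × Fin n_v) (Fin m) ℝ)
    (hVbar : Vbar = fun p j => if p.1 = j then v p.2 else 0)
    (Wbar : Matrix (Fin m × Fin n_v) (Fin m × Fin (N*n_w + n_w)) ℝ)
    (hWbar : Wbar = fun p q => if p.1 = q.1 then Wb p.2 q.2 else 0)
    -- `𝐆ᵀ` collects the row blocks `(G^H_{i·} 𝐁)ᵀ`, `𝐠ᵀ` the row blocks `(G^w_{i·})ᵀ`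
    (Gvec : Fin m × Fin (N*n_u) → ℝ) (hGvec : Gvec = fun q => (GH * B) q.1 q.2)
    (gvec : Fin m × Fin (N*n_w + n_w) → ℝ) (hgvec : gvec = fun p => Gw p.1 p.2)
    -- the stacked inequality constraint `𝐕̄ᵀλ + G^H 𝐁 h + G^θ 𝐀 θ + G^δ δ + g ≤ 0`
    (hineq : Vbarᵀ.mulVec lam + (GH * B).mulVec h + (Gθ * A).mulVec θ
        + Gδ.mulVec δ + g ≤ 0)
    -- the stacked equality constraint `𝐖̄ᵀλ = (I_m ⊗ [H 0]ᵀ) 𝐆ᵀ + 𝐠ᵀ`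
    (heq : Wbarᵀ.mulVec lam =
      ((1 : Matrix (Fin m) (Fin m) ℝ) ⊗ₖ (padZero (q := n_w) H)ᵀ).mulVec Gvec + gvec) :
    ∀ w : Fin (N*n_w + n_w) → ℝ, Wb.mulVec w ≤ v →
      ∃ δ' : Fin (n_c + n_b) → ℝ, memDelta n_c n_b δ' ∧
        ∀ i, (GH * padZero (q := n_w) (B * H) + Gw).mulVec w i + (GH * B).mulVec h i
          + (Gθ * A).mulVec θ i + Gδ.mulVec δ' i + g i ≤ 0 := by
  intro w hw
  -- `vec` stacks columns, so `lam = vec Λᵀ`, `Gvec = vec (G^H 𝐁)ᵀ` and `gvec = vec (G^w)ᵀ`.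
  set Λ : Matrix (Fin m) (Fin n_v) ℝ := of (Function.curry lam)
  have hcoef : Λ * Wb = GH * padZero (q := n_w) (B * H) + Gw := by
    rw [← mul_padZero, ← Matrix.mul_assoc]
    subst hGvec hgvec
    exact mul_eq_of_kronecker_mulVec_vec_eq (hWbar.trans (one_kronecker_eq Wb).symm ▸ heq)
  have hbound : (GH * padZero (q := n_w) (B * H) + Gw) *ᵥ w ≤ Vbarᵀ *ᵥ lam := by
    rw [← hcoef, ← mulVec_mulVec, transpose_mulVec_blockDiag_col hVbar]
    exact mulVec_le_mulVec_of_nonneg (fun i j => hlam (i, j)) hw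
  refine ⟨δ, hδ, fun i => le_trans ?_ (hineq i)⟩
  simp only [Pi.add_apply]
  linarith [hbound i]
end

section
/- (Example 1, strictness of the inner approximation.) For every θ ∈ ℝ, the inner approximation is a strict subset of the exact set: C̄^φ(θ) ⊆ C^φ(θ), and the point (H,h) = (0, −θ) belongs to C^φ(θ) but not to C̄^φ(θ). -/
/-- **Example 1, strictness of the inner approximation.**  For every `θ`, the inner
approximation `C̄^φ(θ)` is contained in the exact set `C^φ(θ)`, and the open-loop policy
`(H,h) = (0, −θ)` belongs to `C^φ(θ)` but not to `C̄^φ(θ)`. -/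
theorem example1_inner_approximation_strict (θ : ℝ) :
    {p : ℝ × ℝ | (∀ w ∈ Set.Icc (-1 : ℝ) 1,
        θ + p.1 * w + p.2 - w ∈ Set.Icc (-1 : ℝ) 0) ∨
      (∀ w ∈ Set.Icc (-1 : ℝ) 1, θ + p.1 * w + p.2 - w ∈ Set.Icc (0 : ℝ) 1)} ⊆
      {p : ℝ × ℝ | ∀ w ∈ Set.Icc (-1 : ℝ) 1,
        θ + p.1 * w + p.2 - w ∈ Set.Icc (-1 : ℝ) 0 ∪ Set.Icc (0 : ℝ) 1} ∧
    ((0 : ℝ), -θ) ∈ {p : ℝ × ℝ | ∀ w ∈ Set.Icc (-1 : ℝ) 1,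
        θ + p.1 * w + p.2 - w ∈ Set.Icc (-1 : ℝ) 0 ∪ Set.Icc (0 : ℝ) 1} ∧
    ((0 : ℝ), -θ) ∉ {p : ℝ × ℝ | (∀ w ∈ Set.Icc (-1 : ℝ) 1,
        θ + p.1 * w + p.2 - w ∈ Set.Icc (-1 : ℝ) 0) ∨
      (∀ w ∈ Set.Icc (-1 : ℝ) 1, θ + p.1 * w + p.2 - w ∈ Set.Icc (0 : ℝ) 1)} := by
  refine ⟨?_, ?_, ?_⟩
  · rintro p (hp | hp) w hw
    · exact Or.inl (hp w hw)
    · exact Or.inr (hp w hw)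
  · intro w hw
    simp only [Set.mem_Icc] at hw
    have : θ + (0:ℝ) * w + -θ - w = -w := by ring
    rw [this]
    rcases le_total w 0 with h | h
    · exact Or.inr ⟨by linarith, by linarith⟩
    · exact Or.inl ⟨by linarith, by linarith⟩
  · rintro (h | h)
    · have := h (-1) (by constructor <;> norm_num)
      simp only [Set.mem_Icc] at this
      have h1 : θ + (0:ℝ) * (-1) + -θ - (-1) = 1 := by ring
      rw [h1] at this; linarith [this.2]
    · have := h 1 (by constructor <;> norm_num)
      simp only [Set.mem_Icc] at this
      have h1 : θ + (0:ℝ) * 1 + -θ - 1 = -1 := by ring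
      rw [h1] at this; linarith [this.1]
end
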